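/- Let π be the linear template with N parameters given by π(a) = ∑_{i=1}^N a_i·x_i, and suppose m ≥ 0 satisfies V_{m+1} = V_m and J_{m+1} = J_m. Then V_m = {v ∈ ℝ^N : ⟨v, x(t)⟩ = 0 for all t ∈ D}, and consequently the orthogonal complement of V_m in ℝ^N equals the linear span of the trajectory: V_m^⊥ = span{x(t) : t ∈ D}. -/

import Mathlib

/-!
Along a solution, `t ↦ p (x t)` has derivative `t ↦ (𝓛 p) (x t)`, so the Taylor coefficients at `0`
of this analytic function are the values `(𝓛⁽ʲ⁾ p)(v₀)`, and by the identity theorem it vanishes on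
`D` iff all of them vanish. Stabilisation of the chain makes `J_m` closed under the derivation `𝓛`;
as `J_m` lies in the kernel of evaluation at `v₀`, every `v ∈ V_m` satisfies
`(𝓛⁽ʲ⁾ π[v])(v₀) = 0` for all `j`, not only for `j ≤ m`. Hence `V_m` consists of the `v` with
`π[v]` vanishing along the trajectory, which for the linear template means `⟨v, x t⟩ = 0`; the
second claim is then `(span S)ᗮᗮ = span S` in finite dimension.
-/

open MvPolynomial

/-- The Lie derivative of a polynomial along the polynomial vector field `F`. -/
noncomputable def lieDeriv {N : ℕ} (F : Fin N → MvPolynomial (Fin N) ℝ)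
    (p : MvPolynomial (Fin N) ℝ) : MvPolynomial (Fin N) ℝ :=
  ∑ i, pderiv i p * F i

/-- The vector space `V_i` of parameters `v` such that all Lie derivatives of `π[v]`
up to order `i` vanish at `v₀`. -/
def Vset {N n : ℕ} (F : Fin N → MvPolynomial (Fin N) ℝ) (v₀ : Fin N → ℝ)
    (π : (Fin n → ℝ) →ₗ[ℝ] MvPolynomial (Fin N) ℝ) (i : ℕ) : Set (Fin n → ℝ) :=
  {v | ∀ j ≤ i, eval v₀ ((lieDeriv F)^[j] (π v)) = 0}

/-- The ideal `J_i` generated by `⋃_{j=0}^{i} 𝓛⁽ʲ⁾(π[V_i])`. -/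
noncomputable def Jideal {N n : ℕ} (F : Fin N → MvPolynomial (Fin N) ℝ)
    (v₀ : Fin N → ℝ) (π : (Fin n → ℝ) →ₗ[ℝ] MvPolynomial (Fin N) ℝ) (i : ℕ) :
    Ideal (MvPolynomial (Fin N) ℝ) :=
  Ideal.span {q | ∃ j ≤ i, ∃ v ∈ Vset F v₀ π i, q = (lieDeriv F)^[j] (π v)}

open Filter Set

section LieDerivative

variable {N : ℕ} (F : Fin N → MvPolynomial (Fin N) ℝ)

noncomputable def lieDerivation : Derivation ℝ (MvPolynomial (Fin N) ℝ) (MvPolynomial (Fin N) ℝ) :=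
  ∑ i, F i • pderiv i

lemma coe_lieDerivation : ⇑(lieDerivation F) = lieDeriv F := by
  funext p
  rw [lieDerivation, ← Derivation.coeFnAddMonoidHom_apply, map_sum, Finset.sum_apply]
  simp [lieDeriv, mul_comm]

lemma lieDeriv_add (p q : MvPolynomial (Fin N) ℝ) :
    lieDeriv F (p + q) = lieDeriv F p + lieDeriv F q := by
  simp only [← coe_lieDerivation, map_add]

lemma lieDeriv_mul (p q : MvPolynomial (Fin N) ℝ) :
    lieDeriv F (p * q) = p * lieDeriv F q + q * lieDeriv F p := by
  simp only [← coe_lieDerivation, Derivation.leibniz, smul_eq_mul]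

lemma lieDeriv_X (i : Fin N) : lieDeriv F (X i) = F i := by
  simp [lieDeriv, pderiv_X, Pi.single_apply]

end LieDerivative

theorem Derivation.apply_mem_span_of_forall_mem {R A : Type*} [CommSemiring R] [CommSemiring A]
    [Algebra R A] (d : Derivation R A A) {s : Set A} (hs : ∀ a ∈ s, d a ∈ Ideal.span s)
    {a : A} (ha : a ∈ Ideal.span s) : d a ∈ Ideal.span s := by
  induction ha using Submodule.span_induction with
  | mem a ha => exact hs a ha
  | zero => simp
  | add a b _ _ ha hb => rw [map_add]; exact Ideal.add_mem _ ha hb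
  | smul c a haI ha =>
      rw [smul_eq_mul, Derivation.leibniz, smul_eq_mul, smul_eq_mul]
      exact Ideal.add_mem _ (Ideal.mul_mem_left _ _ ha) (Ideal.mul_mem_right _ _ haI)

theorem AnalyticOnNhd.eqOn_zero_of_forall_iteratedDeriv_eq_zero {𝕜 E : Type*}
    [NontriviallyNormedField 𝕜] [CharZero 𝕜] [NormedAddCommGroup E] [NormedSpace 𝕜 E]
    [CompleteSpace E] {f : 𝕜 → E} {U : Set 𝕜} {z₀ : 𝕜} (hf : AnalyticOnNhd 𝕜 f U)
    (hU : IsPreconnected U) (h₀ : z₀ ∈ U) (hz : ∀ n, iteratedDeriv n f z₀ = 0) :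
    EqOn f 0 U := by
  have htop : analyticOrderAt f z₀ = ⊤ := ENat.eq_top_iff_forall_ge.mpr fun n =>
    (natCast_le_analyticOrderAt_iff_iteratedDeriv_eq_zero (hf z₀ h₀)).mpr fun i _ => hz i
  exact hf.eqOn_zero_of_preconnected_of_eventuallyEq_zero hU h₀ (analyticOrderAt_eq_top.mp htop)

section Trajectory

variable {N : ℕ} {F : Fin N → MvPolynomial (Fin N) ℝ} {D : Set ℝ} {x : ℝ → Fin N → ℝ}

lemma hasDerivAt_eval_trajectory (hsol : ∀ t ∈ D, HasDerivAt x (fun i => eval (x t) (F i)) t)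
    (p : MvPolynomial (Fin N) ℝ) {t : ℝ} (ht : t ∈ D) :
    HasDerivAt (fun s => eval (x s) p) (eval (x t) (lieDeriv F p)) t := by
  induction p using MvPolynomial.induction_on with
  | C a => simpa [lieDeriv] using hasDerivAt_const t a
  | add p q hp hq => simpa [lieDeriv_add, Pi.add_def] using hp.add hq
  | mul_X p i hp =>
      have hxi : HasDerivAt (fun s => x s i) (eval (x t) (F i)) t := hasDerivAt_pi.mp (hsol t ht) i
      simpa [lieDeriv_mul, lieDeriv_X, Pi.mul_def, add_comm, mul_comm] using hp.mul hxi

lemma iteratedDeriv_eval_trajectory (hD : IsOpen D)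
    (hsol : ∀ t ∈ D, HasDerivAt x (fun i => eval (x t) (F i)) t)
    (p : MvPolynomial (Fin N) ℝ) (j : ℕ) :
    EqOn (iteratedDeriv j fun s => eval (x s) p) (fun t => eval (x t) ((lieDeriv F)^[j] p)) D := by
  induction j with
  | zero => intro t _; simp
  | succ j ih =>
      intro t ht
      rw [iteratedDeriv_succ, (eventuallyEq_of_mem (hD.mem_nhds ht) ih).deriv_eq,
        Function.iterate_succ_apply']
      exact (hasDerivAt_eval_trajectory hsol _ ht).deriv

lemma eqOn_zero_iff_forall_eval_iterate_lieDeriv_eq_zero (hD : IsOpen D) (hDc : IsPreconnected D)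
    (h0 : (0 : ℝ) ∈ D) (hsol : ∀ t ∈ D, HasDerivAt x (fun i => eval (x t) (F i)) t)
    (han : ∀ i, AnalyticOnNhd ℝ (fun t => x t i) D) (p : MvPolynomial (Fin N) ℝ) :
    EqOn (fun t => eval (x t) p) 0 D ↔ ∀ j, eval (x 0) ((lieDeriv F)^[j] p) = 0 := by
  have hderiv (j : ℕ) : iteratedDeriv j (fun s => eval (x s) p) 0 =
      eval (x 0) ((lieDeriv F)^[j] p) := iteratedDeriv_eval_trajectory hD hsol p j h0
  constructor
  · intro hp j
    rw [← hderiv, (eventuallyEq_of_mem (hD.mem_nhds h0) hp).iteratedDeriv_eq]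
    simp
  · intro hp
    refine AnalyticOnNhd.eqOn_zero_of_forall_iteratedDeriv_eq_zero ?_ hDc h0 fun j => ?_
    · simpa using AnalyticOnNhd.aeval_mvPolynomial han p
    · rw [hderiv, hp]

end Trajectory

section StableChain

variable {N n : ℕ} {F : Fin N → MvPolynomial (Fin N) ℝ} {v₀ : Fin N → ℝ}
  {π : (Fin n → ℝ) →ₗ[ℝ] MvPolynomial (Fin N) ℝ} {m : ℕ}

lemma Jideal_le_ker_eval : Jideal F v₀ π m ≤ RingHom.ker (eval v₀) := by
  rw [Jideal, Ideal.span_le]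
  rintro _ ⟨j, hj, v, hv, rfl⟩
  exact hv j hj

lemma lieDeriv_mem_Jideal_of_stable (hV : Vset F v₀ π (m + 1) = Vset F v₀ π m)
    (hJ : Jideal F v₀ π (m + 1) = Jideal F v₀ π m) {p : MvPolynomial (Fin N) ℝ}
    (hp : p ∈ Jideal F v₀ π m) : lieDeriv F p ∈ Jideal F v₀ π m := by
  rw [← coe_lieDerivation]
  refine (lieDerivation F).apply_mem_span_of_forall_mem ?_ hp
  rintro _ ⟨j, hj, v, hv, rfl⟩
  rw [coe_lieDerivation, ← Function.iterate_succ_apply' (lieDeriv F)]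
  change _ ∈ Jideal F v₀ π m
  rw [← hJ]
  exact Ideal.subset_span ⟨j + 1, by omega, v, hV ▸ hv, rfl⟩

lemma iterate_lieDeriv_mem_Jideal_of_stable (hV : Vset F v₀ π (m + 1) = Vset F v₀ π m)
    (hJ : Jideal F v₀ π (m + 1) = Jideal F v₀ π m) {v : Fin n → ℝ} (hv : v ∈ Vset F v₀ π m)
    (j : ℕ) : (lieDeriv F)^[j] (π v) ∈ Jideal F v₀ π m := by
  induction j with
  | zero => exact Ideal.subset_span ⟨0, Nat.zero_le _, v, hv, rfl⟩
  | succ j ih =>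
      rw [Function.iterate_succ_apply']
      exact lieDeriv_mem_Jideal_of_stable hV hJ ih

lemma mem_Vset_iff_of_stable (hV : Vset F v₀ π (m + 1) = Vset F v₀ π m)
    (hJ : Jideal F v₀ π (m + 1) = Jideal F v₀ π m) (v : Fin n → ℝ) :
    v ∈ Vset F v₀ π m ↔ ∀ j, eval v₀ ((lieDeriv F)^[j] (π v)) = 0 :=
  ⟨fun hv j => Jideal_le_ker_eval (iterate_lieDeriv_mem_Jideal_of_stable hV hJ hv j),
    fun hv j _ => hv j⟩

end StableChain

theorem mem_span_iff_forall_dotProduct_eq_zero {ι : Type*} [Fintype ι] (s : Set (ι → ℝ))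
    (w : ι → ℝ) : w ∈ Submodule.span ℝ s ↔ ∀ v, (∀ u ∈ s, v ⬝ᵥ u = 0) → v ⬝ᵥ w = 0 := by
  let e : (ι → ℝ) ≃ₗ[ℝ] EuclideanSpace ℝ ι := (WithLp.linearEquiv 2 ℝ (ι → ℝ)).symm
  let K : Submodule ℝ (EuclideanSpace ℝ ι) :=
    (Submodule.span ℝ s).map (e : (ι → ℝ) →ₗ[ℝ] EuclideanSpace ℝ ι)
  have hK (v : ι → ℝ) : e v ∈ Kᗮ ↔ ∀ u ∈ s, v ⬝ᵥ u = 0 := by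
    rw [Submodule.mem_orthogonal']
    change K ≤ LinearMap.ker (innerₛₗ ℝ (e v)) ↔ _
    rw [Submodule.map_le_iff_le_comap, Submodule.span_le]
    refine forall₂_congr fun u _ => ?_
    simp [e, EuclideanSpace.inner_toLp_toLp, dotProduct_comm]
  have hw : w ∈ Submodule.span ℝ s ↔ e w ∈ Kᗮᗮ := by
    rw [Submodule.orthogonal_orthogonal, Submodule.mem_map_equiv, LinearEquiv.symm_apply_apply]
  rw [hw, Submodule.mem_orthogonal', ← e.toEquiv.forall_congr_right]
  refine forall_congr' fun v => imp_congr (hK v) ?_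
  simp [e, EuclideanSpace.inner_toLp_toLp, dotProduct_comm]

theorem Vset_eq_of_stable {N n : ℕ} {F : Fin N → MvPolynomial (Fin N) ℝ} {v₀ : Fin N → ℝ}
    {D : Set ℝ} (hD : IsOpen D) (hDc : IsPreconnected D) (h0 : (0 : ℝ) ∈ D)
    {x : ℝ → Fin N → ℝ} (hsol : ∀ t ∈ D, HasDerivAt x (fun i => eval (x t) (F i)) t)
    (hx0 : x 0 = v₀) (han : ∀ i, AnalyticOnNhd ℝ (fun t => x t i) D)
    {π : (Fin n → ℝ) →ₗ[ℝ] MvPolynomial (Fin N) ℝ} {m : ℕ}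
    (hV : Vset F v₀ π (m + 1) = Vset F v₀ π m) (hJ : Jideal F v₀ π (m + 1) = Jideal F v₀ π m) :
    Vset F v₀ π m = {v | EqOn (fun t => eval (x t) (π v)) 0 D} := by
  ext v
  rw [mem_Vset_iff_of_stable hV hJ, Set.mem_ofPred_eq,
    eqOn_zero_iff_forall_eval_iterate_lieDeriv_eq_zero hD hDc h0 hsol han, hx0]

theorem stmt13_general
    (N : ℕ)
    (F : Fin N → MvPolynomial (Fin N) ℝ) (v₀ : Fin N → ℝ)
    (D : Set ℝ) (hD : IsOpen D) (hDc : D.OrdConnected) (h0 : (0 : ℝ) ∈ D)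
    (x : ℝ → Fin N → ℝ)
    (hsol : ∀ t ∈ D, HasDerivAt x (fun i => eval (x t) (F i)) t)
    (hx0 : x 0 = v₀)
    (han : ∀ i, AnalyticOnNhd ℝ (fun t => x t i) D)
    (π : (Fin N → ℝ) →ₗ[ℝ] MvPolynomial (Fin N) ℝ)
    (hπ : ∀ a : Fin N → ℝ, π a = ∑ i, a i • (X i : MvPolynomial (Fin N) ℝ))
    (m : ℕ)
    (hV : Vset F v₀ π (m + 1) = Vset F v₀ π m)
    (hJ : Jideal F v₀ π (m + 1) = Jideal F v₀ π m) :
    Vset F v₀ π m = {v : Fin N → ℝ | ∀ t ∈ D, ∑ i, v i * x t i = 0} ∧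
    {w : Fin N → ℝ | ∀ v ∈ Vset F v₀ π m, ∑ i, v i * w i = 0}
      = (Submodule.span ℝ (x '' D) : Set (Fin N → ℝ)) := by
  have heval (v w : Fin N → ℝ) : eval w (π v) = ∑ i, v i * w i := by
    simp [hπ, smul_eq_C_mul]
  have hVm : Vset F v₀ π m = {v | ∀ t ∈ D, ∑ i, v i * x t i = 0} := by
    rw [Vset_eq_of_stable hD hDc.isPreconnected h0 hsol hx0 han hV hJ]
    simp [EqOn, heval]
  refine ⟨hVm, Set.ext fun w => ?_⟩
  rw [hVm, SetLike.mem_coe, mem_span_iff_forall_dotProduct_eq_zero]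
  simp [dotProduct]

/-- for the linear template `π(a) = ∑ᵢ aᵢ xᵢ`, if the double chain
stabilizes at `m`, then `V_m` is exactly the set of vectors orthogonal to the whole
trajectory, and its orthogonal complement equals the linear span of the trajectory. -/
theorem stmt13
    (N : ℕ) (hN : 1 ≤ N)
    (F : Fin N → MvPolynomial (Fin N) ℝ) (v₀ : Fin N → ℝ)
    (D : Set ℝ) (hD : IsOpen D) (hDc : D.OrdConnected) (h0 : (0 : ℝ) ∈ D)
    (x : ℝ → Fin N → ℝ)
    (hsol : ∀ t ∈ D, HasDerivAt x (fun i => eval (x t) (F i)) t)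
    (hx0 : x 0 = v₀)
    (han : ∀ i, AnalyticOnNhd ℝ (fun t => x t i) D)
    (π : (Fin N → ℝ) →ₗ[ℝ] MvPolynomial (Fin N) ℝ)
    (hπ : ∀ a : Fin N → ℝ, π a = ∑ i, a i • (X i : MvPolynomial (Fin N) ℝ))
    (m : ℕ)
    (hV : Vset F v₀ π (m + 1) = Vset F v₀ π m)
    (hJ : Jideal F v₀ π (m + 1) = Jideal F v₀ π m) :
    Vset F v₀ π m = {v : Fin N → ℝ | ∀ t ∈ D, ∑ i, v i * x t i = 0} ∧
    {w : Fin N → ℝ | ∀ v ∈ Vset F v₀ π m, ∑ i, v i * w i = 0}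
      = (Submodule.span ℝ (x '' D) : Set (Fin N → ℝ)) :=
  stmt13_general N F v₀ D hD hDc h0 x hsol hx0 han π hπ m hV hJ
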